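/- arXiv:math/0406295 — 13 statements merged into one kernel-verified Lean document; each statement's English description precedes it below -/
import Mathlib

section
/- For an ideal I of an integral domain R with quotient field K, the Kaplansky transform Ω(I) = {x ∈ K : for each a ∈ I there exists n ≥ 1 with a^n x ∈ R} equals the intersection of the localizations R_P over all prime ideals P of R not containing I. -/
noncomputable section

/-- The image of `A` in `L` under the algebra map, as a set. -/
def imageR (A L : Type*) [CommRing A] [CommRing L] [Algebra A L] : Set L :=
  Set.range (algebraMap A L)

/-- The Kaplansky transform of an ideal `I` of `A`, computed inside `L`. -/
def omegaSet (A L : Type*) [CommRing A] [CommRing L] [Algebra A L] (I : Ideal A) : Set L :=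
  {x : L | ∀ a ∈ I, ∃ n : ℕ, 1 ≤ n ∧ ∃ r : A, (algebraMap A L a) ^ n * x = algebraMap A L r}

/-- The localization of `A` at the prime `P`, viewed as a subset of `L`. -/
def locSet (A L : Type*) [CommRing A] [CommRing L] [Algebra A L] (P : Ideal A) : Set L :=
  {x : L | ∃ s : A, s ∉ P ∧ ∃ r : A, x * algebraMap A L s = algebraMap A L r}

/-- The conductor ideal `(A :_A U) = {r : A | r • U ⊆ A}`. -/
def condIdeal (A L : Type*) [CommRing A] [CommRing L] [Algebra A L] (U : Set L) : Ideal A where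
  carrier := {r : A | ∀ u ∈ U, ∃ r' : A, algebraMap A L r * u = algebraMap A L r'}
  zero_mem' := fun u _ => ⟨0, by simp⟩
  add_mem' := by
    rintro a b ha hb u hu
    obtain ⟨a', ha'⟩ := ha u hu
    obtain ⟨b', hb'⟩ := hb u hu
    exact ⟨a' + b', by rw [map_add, map_add, add_mul, ha', hb']⟩
  smul_mem' := by
    rintro c r h u hu
    obtain ⟨r', hr'⟩ := h u hu
    exact ⟨c * r', by rw [smul_eq_mul, map_mul, map_mul, mul_assoc, hr']⟩

/-- A domain is an sQQR-domain if every simple overring `R[u]`, `u` in the quotient field,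
is an intersection of localizations of `R` at primes. -/
def IsSQQR (A : Type*) [CommRing A] [IsDomain A] : Prop :=
  ∀ u : FractionRing A, ∃ Ps : Set (Ideal A), (∀ P ∈ Ps, P.IsPrime) ∧
    (↑(Algebra.adjoin A {u} : Subalgebra A (FractionRing A)) : Set (FractionRing A)) =
      ⋂ P ∈ Ps, locSet A (FractionRing A) P

/-- A Prüfer domain: every localization at a prime is a valuation domain. -/
def IsPrufer (A : Type*) [CommRing A] [IsDomain A] : Prop :=
  ∀ (P : Ideal A) (hP : P.IsPrime),
    haveI := hP
    letI : IsDomain (Localization.AtPrime P) := IsLocalization.isDomain_of_local_atPrime hP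
    ValuationRing (Localization.AtPrime P)


theorem stmt0 (R : Type*) [CommRing R] [IsDomain R] (K : Type*) [Field K] [Algebra R K]
    [IsFractionRing R K] (I : Ideal R) :
    omegaSet R K I = ⋂ P ∈ {P : Ideal R | P.IsPrime ∧ ¬ I ≤ P}, locSet R K P := by
  ext x
  simp only [Set.mem_iInter, Set.mem_setOf_eq, omegaSet, locSet]
  constructor
  · rintro hx P ⟨hP, hIP⟩
    obtain ⟨a, haI, haP⟩ := Set.not_subset.mp hIP
    obtain ⟨n, hn, r, hr⟩ := hx a haI
    refine ⟨a ^ n, fun h => haP (hP.mem_of_pow_mem n h), r, ?_⟩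
    rw [map_pow, mul_comm]
    exact hr
  · intro hx a haI
    set J := condIdeal R K {x} with hJ
    by_cases h : a ∈ J.radical
    · obtain ⟨n, hn⟩ := h
      obtain ⟨r, hr⟩ := (J.mul_mem_left a hn) x rfl
      refine ⟨n + 1, le_add_self, r, ?_⟩
      rw [map_mul, map_pow] at hr
      rw [pow_succ, mul_comm ((algebraMap R K a) ^ n), mul_assoc, ← mul_assoc]
      exact hr
    · exfalso
      rw [Ideal.radical_eq_sInf, Ideal.mem_sInf] at h
      push_neg at h
      obtain ⟨P, ⟨hJP, hPprime⟩, haP⟩ := h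
      obtain ⟨s, hsP, r, hsr⟩ := hx P ⟨hPprime, fun hIP => haP (hIP haI)⟩
      refine hsP (hJP ?_)
      intro u hu
      rw [Set.mem_singleton_iff] at hu
      subst hu
      exact ⟨r, by rw [mul_comm]; exact hsr⟩

end
end

section
/- Let R be an integral domain and I an ideal of R such that for every prime P of R with I ⊆ P, Ω(I) is not contained in R_P. Then rad I is the largest ideal J of R with Ω(J) = Ω(I); that is, for any ideal J with Ω(J) = Ω(I) one has J ⊆ rad I. -/
noncomputable section

theorem stmt2 (R : Type*) [CommRing R] [IsDomain R] (K : Type*) [Field K] [Algebra R K]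
    [IsFractionRing R K] (I : Ideal R)
    (h : ∀ P : Ideal R, P.IsPrime → I ≤ P → ¬ omegaSet R K I ⊆ locSet R K P) :
    omegaSet R K I.radical = omegaSet R K I ∧
      ∀ J : Ideal R, omegaSet R K J = omegaSet R K I → J ≤ I.radical := by
  constructor
  · ext x
    constructor
    · intro hx a ha
      exact hx a (Ideal.le_radical ha)
    · intro hx a ha
      obtain ⟨m, hm⟩ := ha
      rcases Nat.eq_zero_or_pos m with h0 | hpos
      · subst h0
        rw [pow_zero] at hm
        obtain ⟨n, hn1, r, hr⟩ := hx 1 hm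
        have hxr : x = algebraMap R K r := by simpa using hr
        exact ⟨1, le_refl 1, a * r, by rw [pow_one, hxr, map_mul]⟩
      · obtain ⟨n, hn1, r, hr⟩ := hx (a ^ m) hm
        refine ⟨m * n, Nat.one_le_iff_ne_zero.mpr (by positivity), r, ?_⟩
        rw [pow_mul, ← map_pow]
        exact hr
  · intro J hJ b hb
    by_contra hbr
    rw [Ideal.radical_eq_sInf, Ideal.mem_sInf] at hbr
    push_neg at hbr
    obtain ⟨P, ⟨hIP, hPprime⟩, hbP⟩ := hbr
    apply h P hPprime hIP
    rw [← hJ]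
    intro x hx
    obtain ⟨n, hn, r, hr⟩ := hx b hb
    refine ⟨b ^ n, fun hc => hbP (hPprime.mem_of_pow_mem n hc), r, ?_⟩
    rw [map_pow, mul_comm]
    exact hr

end
end

section
/- Let R be an integral domain with quotient field K and let U ⊆ K. Then the subring R[U] generated by R and U is contained in the Kaplansky transform Ω(R :_R U), where (R :_R U) = {r ∈ R : rU ⊆ R}. -/
noncomputable section

theorem stmt3 (R : Type*) [CommRing R] [IsDomain R] (K : Type*) [Field K] [Algebra R K]
    [IsFractionRing R K] (U : Set K) :
    (↑(Algebra.adjoin R U) : Set K) ⊆ omegaSet R K (condIdeal R K U) := by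
  intro x hx a ha
  induction hx using Algebra.adjoin_induction with
  | mem u hu =>
      obtain ⟨r, hr⟩ := ha u hu
      exact ⟨1, le_refl 1, r, by simpa using hr⟩
  | algebraMap r =>
      exact ⟨1, le_refl 1, a * r, by simp [map_mul]⟩
  | add x y hxm hym ihx ihy =>
      obtain ⟨n, hn, r, hr⟩ := ihx
      obtain ⟨m, hm, s, hs⟩ := ihy
      refine ⟨n + m, by omega, a ^ m * r + a ^ n * s, ?_⟩
      have h1 : (algebraMap R K a) ^ (n + m) * (x + y) =
          (algebraMap R K a) ^ m * ((algebraMap R K a) ^ n * x) +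
          (algebraMap R K a) ^ n * ((algebraMap R K a) ^ m * y) := by ring
      rw [h1, hr, hs, map_add, map_mul, map_mul, map_pow, map_pow]
  | mul x y hxm hym ihx ihy =>
      obtain ⟨n, hn, r, hr⟩ := ihx
      obtain ⟨m, hm, s, hs⟩ := ihy
      refine ⟨n + m, by omega, r * s, ?_⟩
      have h1 : (algebraMap R K a) ^ (n + m) * (x * y) =
          ((algebraMap R K a) ^ n * x) * ((algebraMap R K a) ^ m * y) := by ring
      rw [h1, hr, hs, map_mul]

end
end

section
/- Let R be an integral domain with quotient field K and let U be a finite subset of K. Then R[U] is the Kaplansky transform of some ideal of R if and only if R[U] = Ω(R :_R U). -/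
noncomputable section

/-! Every element of `R[U]` is multiplied into `R` by a power of any `a ∈ (R :_R U)`, so
`R[U] ⊆ Ω(R :_R U)` always. Conversely, if `R[U] = Ω(I)` then each `u ∈ U` is multiplied into `R`
by a power of any `a ∈ I`; as `U` is finite one power works for all of `U`, so `a` has a power in
`(R :_R U)`, and therefore `Ω(R :_R U) ⊆ Ω(I) = R[U]`. -/

open Filter

section Kaplansky

variable {A L : Type*} [CommRing A] [CommRing L] [Algebra A L]

/-- When `L` is the fraction field of a domain `A` and `a ≠ 0`, this is the localization `A[1/a]`. -/
def awaySubalgebra (a : A) : Subalgebra A L where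
  carrier := {x | ∃ n : ℕ, ∃ r : A, algebraMap A L a ^ n * x = algebraMap A L r}
  algebraMap_mem' r := ⟨0, r, by simp⟩
  add_mem' := by
    rintro x y ⟨m, r, hr⟩ ⟨n, s, hs⟩
    refine ⟨m + n, a ^ n * r + a ^ m * s, ?_⟩
    rw [map_add, map_mul, map_mul, map_pow, map_pow, ← hr, ← hs]
    ring
  mul_mem' := by
    rintro x y ⟨m, r, hr⟩ ⟨n, s, hs⟩
    refine ⟨m + n, r * s, ?_⟩
    rw [map_mul, ← hr, ← hs]
    ring

theorem eventually_pow_mul_mem_of_mem_awaySubalgebra {a : A} {x : L}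
    (hx : x ∈ awaySubalgebra a) :
    ∀ᶠ n in atTop, ∃ r : A, algebraMap A L a ^ n * x = algebraMap A L r := by
  obtain ⟨n, r, hr⟩ := hx
  filter_upwards [eventually_ge_atTop n] with m hm
  refine ⟨a ^ (m - n) * r, ?_⟩
  rw [map_mul, map_pow, ← hr, ← mul_assoc, ← pow_add, Nat.sub_add_cancel hm]

theorem adjoin_le_awaySubalgebra {a : A} {U : Set L} (ha : a ∈ condIdeal A L U) :
    Algebra.adjoin A U ≤ awaySubalgebra a :=
  Algebra.adjoin_le fun u hu => ⟨1, by simpa using ha u hu⟩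

theorem adjoin_subset_omegaSet_condIdeal (U : Set L) :
    (Algebra.adjoin A U : Set L) ⊆ omegaSet A L (condIdeal A L U) := by
  intro x hx a ha
  obtain ⟨n, r, hr⟩ := adjoin_le_awaySubalgebra ha hx
  refine ⟨n + 1, Nat.le_add_left 1 n, a * r, ?_⟩
  rw [map_mul, ← hr]
  ring

theorem omegaSet_subset_awaySubalgebra {I : Ideal A} {a : A} (ha : a ∈ I) :
    omegaSet A L I ⊆ ((awaySubalgebra a : Subalgebra A L) : Set L) := fun _ hx =>
  let ⟨n, _, hn⟩ := hx a ha
  ⟨n, hn⟩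

theorem exists_pow_mem_condIdeal {a : A} {U : Set L} (hU : U.Finite)
    (h : U ⊆ ((awaySubalgebra a : Subalgebra A L) : Set L)) :
    ∃ n : ℕ, 1 ≤ n ∧ a ^ n ∈ condIdeal A L U := by
  have hall : ∀ᶠ n in atTop, ∀ u ∈ U, ∃ r : A, algebraMap A L a ^ n * u = algebraMap A L r :=
    (eventually_all_finite hU).2 fun u hu => eventually_pow_mul_mem_of_mem_awaySubalgebra (h hu)
  obtain ⟨n, hn, hU'⟩ := ((eventually_ge_atTop 1).and hall).exists
  exact ⟨n, hn, fun u hu => by simpa only [map_pow] using hU' u hu⟩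

theorem omegaSet_subset_omegaSet_of_forall_pow_mem {I J : Ideal A}
    (h : ∀ a ∈ I, ∃ n : ℕ, 1 ≤ n ∧ a ^ n ∈ J) : omegaSet A L J ⊆ omegaSet A L I := by
  intro x hx a ha
  obtain ⟨n, hn, haJ⟩ := h a ha
  obtain ⟨k, hk, r, hr⟩ := hx (a ^ n) haJ
  exact ⟨n * k, Nat.one_le_iff_ne_zero.2 (by positivity), r, by rwa [pow_mul, ← map_pow]⟩

end Kaplansky

theorem stmt4_general (R : Type*) [CommRing R] (K : Type*) [Field K] [Algebra R K]
    (U : Set K) (hU : U.Finite) :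
    (∃ I : Ideal R, (↑(Algebra.adjoin R U) : Set K) = omegaSet R K I) ↔
      (↑(Algebra.adjoin R U) : Set K) = omegaSet R K (condIdeal R K U) := by
  refine ⟨fun ⟨I, hI⟩ => ?_, fun h => ⟨_, h⟩⟩
  refine (adjoin_subset_omegaSet_condIdeal U).antisymm ?_
  rw [hI]
  refine omegaSet_subset_omegaSet_of_forall_pow_mem fun a ha => exists_pow_mem_condIdeal hU ?_
  exact (Algebra.subset_adjoin.trans hI.subset).trans (omegaSet_subset_awaySubalgebra ha)

theorem stmt4 (R : Type*) [CommRing R] [IsDomain R] (K : Type*) [Field K] [Algebra R K]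
    [IsFractionRing R K] (U : Set K) (hU : U.Finite) :
    (∃ I : Ideal R, (↑(Algebra.adjoin R U) : Set K) = omegaSet R K I) ↔
      (↑(Algebra.adjoin R U) : Set K) = omegaSet R K (condIdeal R K U) :=
  stmt4_general R K U hU

end
end

section
/- Let R be an integral domain with quotient field K. A finitely generated overring R[U] of R (U a finite subset of K) is a Kaplansky transform of an ideal of R if and only if it is an intersection of localizations of R at prime ideals. -/
noncomputable section

/-!
The conductor `(R :_R {x})` controls both sides: `x ∈ R_P` iff `(R :_R {x}) ⊄ P`, and
`x ∈ Ω(I)` iff `I ⊆ √(R :_R {x})`. Writing the radical as the intersection of the primes above it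
gives `Ω(I) = ⋂_{I ⊄ P} R_P`, which is one direction. Conversely, if `R[U] = ⋂_{P ∈ Ps} R_P` with
`U` finite, then `I = (R :_R U)` works: `Ω(I)` is a ring containing `U`, so `R[U] ⊆ Ω(I)`; and
every `P ∈ Ps` avoids `I`, because each `(R :_R {u})` avoids `P` and `I` contains their product,
so `Ω(I) ⊆ ⋂_{P ∈ Ps} R_P = R[U]`.
-/

section Conductor

variable {R L : Type*} [CommRing R] [CommRing L] [Algebra R L]

lemma mem_condIdeal_singleton {x : L} {a : R} :
    a ∈ condIdeal R L {x} ↔ ∃ r : R, algebraMap R L a * x = algebraMap R L r := by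
  simp [condIdeal]

lemma condIdeal_anti {U V : Set L} (h : U ⊆ V) : condIdeal R L V ≤ condIdeal R L U :=
  fun _ ha u hu => ha u (h hu)

lemma condIdeal_algebraMap (r : R) : condIdeal R L {algebraMap R L r} = ⊤ :=
  Ideal.eq_top_iff_one _ |>.mpr <| mem_condIdeal_singleton.mpr ⟨r, by simp⟩

lemma condIdeal_mul_le_add (x y : L) :
    condIdeal R L {x} * condIdeal R L {y} ≤ condIdeal R L {x + y} := by
  refine Submodule.mul_le.mpr fun a ha b hb => mem_condIdeal_singleton.mpr ?_
  obtain ⟨r, hr⟩ := mem_condIdeal_singleton.mp ha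
  obtain ⟨s, hs⟩ := mem_condIdeal_singleton.mp hb
  refine ⟨b * r + a * s, ?_⟩
  rw [map_mul, mul_add, map_add, map_mul, map_mul, ← hr, ← hs]
  ring

lemma condIdeal_mul_le_mul (x y : L) :
    condIdeal R L {x} * condIdeal R L {y} ≤ condIdeal R L {x * y} := by
  refine Submodule.mul_le.mpr fun a ha b hb => mem_condIdeal_singleton.mpr ?_
  obtain ⟨r, hr⟩ := mem_condIdeal_singleton.mp ha
  obtain ⟨s, hs⟩ := mem_condIdeal_singleton.mp hb
  refine ⟨r * s, ?_⟩
  rw [map_mul, map_mul, ← hr, ← hs]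
  ring

lemma mem_locSet_iff_not_condIdeal_le {P : Ideal R} {x : L} :
    x ∈ locSet R L P ↔ ¬ condIdeal R L {x} ≤ P := by
  simp only [locSet, Set.mem_ofPred_eq, SetLike.not_le_iff_exists, mem_condIdeal_singleton,
    mul_comm x]
  tauto

lemma not_condIdeal_le_of_subset_locSet {U : Set L} (hU : U.Finite) {P : Ideal R}
    (hP : P.IsPrime) (h : U ⊆ locSet R L P) : ¬ condIdeal R L U ≤ P := by
  classical
  have hprod : ∏ u ∈ hU.toFinset, condIdeal R L {u} ≤ condIdeal R L U := by
    refine Ideal.prod_le_inf.trans fun a ha u hu => ?_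
    exact Finset.inf_le (f := fun u => condIdeal R L {u}) (hU.mem_toFinset.mpr hu) ha u rfl
  intro hle
  obtain ⟨u, hu, huP⟩ := hP.prod_le.mp (hprod.trans hle)
  exact mem_locSet_iff_not_condIdeal_le.mp (h (hU.mem_toFinset.mp hu)) huP

end Conductor

section KaplanskyTransform

variable {R L : Type*} [CommRing R] [CommRing L] [Algebra R L]

lemma mem_omegaSet_iff_le_radical {I : Ideal R} {x : L} :
    x ∈ omegaSet R L I ↔ I ≤ (condIdeal R L {x}).radical := by
  refine ⟨fun hx a ha => ?_, fun hx a ha => ?_⟩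
  · obtain ⟨n, -, r, hr⟩ := hx a ha
    exact ⟨n, mem_condIdeal_singleton.mpr ⟨r, by rwa [map_pow]⟩⟩
  · obtain ⟨n, hn⟩ := hx ha
    obtain ⟨r, hr⟩ := mem_condIdeal_singleton.mp hn
    refine ⟨n + 1, le_add_self, a * r, ?_⟩
    rw [map_mul, ← hr, map_pow]
    ring

lemma mem_omegaSet_iff_forall_mem_locSet {I : Ideal R} {x : L} :
    x ∈ omegaSet R L I ↔ ∀ P : Ideal R, P.IsPrime → ¬ I ≤ P → x ∈ locSet R L P := by
  simp only [mem_omegaSet_iff_le_radical, Ideal.radical_eq_sInf, le_sInf_iff,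
    mem_locSet_iff_not_condIdeal_le, Set.mem_ofPred_eq]
  exact forall_congr' fun P => by tauto

theorem omegaSet_eq_iInter_locSet (I : Ideal R) :
    omegaSet R L I = ⋂ P ∈ {P : Ideal R | P.IsPrime ∧ ¬ I ≤ P}, locSet R L P := by
  ext x
  simp only [mem_omegaSet_iff_forall_mem_locSet, Set.mem_iInter₂, Set.mem_ofPred_eq, and_imp]

lemma mem_omegaSet_of_condIdeal_mul_le {I : Ideal R} {x y z : L}
    (hxyz : condIdeal R L {x} * condIdeal R L {y} ≤ condIdeal R L {z})
    (hx : x ∈ omegaSet R L I) (hy : y ∈ omegaSet R L I) : z ∈ omegaSet R L I := by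
  rw [mem_omegaSet_iff_le_radical] at *
  calc I ≤ (condIdeal R L {x}).radical ⊓ (condIdeal R L {y}).radical := le_inf hx hy
    _ = (condIdeal R L {x} * condIdeal R L {y}).radical := (Ideal.radical_mul _ _).symm
    _ ≤ (condIdeal R L {z}).radical := Ideal.radical_mono hxyz

def omegaSubalgebra (I : Ideal R) : Subalgebra R L where
  carrier := omegaSet R L I
  mul_mem' {x y} := mem_omegaSet_of_condIdeal_mul_le (condIdeal_mul_le_mul x y)
  add_mem' {x y} := mem_omegaSet_of_condIdeal_mul_le (condIdeal_mul_le_add x y)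
  algebraMap_mem' r := by
    rw [mem_omegaSet_iff_le_radical, condIdeal_algebraMap, Ideal.radical_top]
    exact le_top

theorem adjoin_le_omegaSubalgebra_condIdeal (U : Set L) :
    Algebra.adjoin R U ≤ omegaSubalgebra (condIdeal R L U) := by
  refine Algebra.adjoin_le fun u hu => mem_omegaSet_iff_le_radical.mpr ?_
  exact (condIdeal_anti (Set.singleton_subset_iff.mpr hu)).trans Ideal.le_radical

theorem adjoin_eq_omegaSet_condIdeal {U : Set L} (hU : U.Finite) {Ps : Set (Ideal R)}
    (hPs : ∀ P ∈ Ps, P.IsPrime) (h : (Algebra.adjoin R U : Set L) = ⋂ P ∈ Ps, locSet R L P) :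
    (Algebra.adjoin R U : Set L) = omegaSet R L (condIdeal R L U) := by
  refine (SetLike.coe_subset_coe.mpr (adjoin_le_omegaSubalgebra_condIdeal U)).antisymm
    fun x hx => ?_
  rw [h, Set.mem_iInter₂]
  refine fun P hP => mem_omegaSet_iff_forall_mem_locSet.mp hx P (hPs P hP) ?_
  refine not_condIdeal_le_of_subset_locSet hU (hPs P hP) fun u hu => ?_
  have hu' : u ∈ ⋂ P ∈ Ps, locSet R L P := h ▸ Algebra.subset_adjoin hu
  exact Set.mem_iInter₂.mp hu' P hP

end KaplanskyTransform

theorem stmt5_general (R : Type*) [CommRing R] (K : Type*) [Field K] [Algebra R K]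
    (U : Set K) (hU : U.Finite) :
    (∃ I : Ideal R, (↑(Algebra.adjoin R U) : Set K) = omegaSet R K I) ↔
      ∃ Ps : Set (Ideal R), (∀ P ∈ Ps, P.IsPrime) ∧
        (↑(Algebra.adjoin R U) : Set K) = ⋂ P ∈ Ps, locSet R K P := by
  constructor
  · rintro ⟨I, hI⟩
    exact ⟨_, fun P hP => hP.1, hI.trans (omegaSet_eq_iInter_locSet I)⟩
  · rintro ⟨Ps, hPs, h⟩
    exact ⟨condIdeal R K U, adjoin_eq_omegaSet_condIdeal hU hPs h⟩

theorem stmt5 (R : Type*) [CommRing R] [IsDomain R] (K : Type*) [Field K] [Algebra R K]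
    [IsFractionRing R K] (U : Set K) (hU : U.Finite) :
    (∃ I : Ideal R, (↑(Algebra.adjoin R U) : Set K) = omegaSet R K I) ↔
      ∃ Ps : Set (Ideal R), (∀ P ∈ Ps, P.IsPrime) ∧
        (↑(Algebra.adjoin R U) : Set K) = ⋂ P ∈ Ps, locSet R K P :=
  stmt5_general R K U hU

end
end

section
/- An integrally closed integral domain R is a Prüfer domain if and only if every simple overring R[u] (u in the quotient field K of R) is an intersection of localizations of R at prime ideals. -/
/-!
(⇒) Given `u ∈ K` and `x ∉ R[u]`, the conductor of `x` into `R[u]` lies in a maximal ideal `M`.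
For `P = M ∩ R` the valuation ring `R_P` contains `u` or `u⁻¹`, and `u⁻¹ ∈ R_P` also forces
`u ∈ R_P` because `M` is proper; so `R[u] ⊆ R_P`, whereas `x ∉ R_P` since the denominator of `x`
would lie in the conductor.

(⇐) Applied to `u = x + x²`, the sQQR property and integral closedness give `x ∈ R[x + x²]`,
so `x` is a root of `q(X + X²) - X` for some `q`. The values of this polynomial at `0` and `-1`
differ by `1`, so for every prime `P` one of its coefficients lies outside `P`, and Kaplansky's
lemma for integrally closed domains puts `x` or `x⁻¹` in `R_P`.
-/

noncomputable section

open Polynomial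

section Localization

variable {R K : Type*} [CommRing R] [IsDomain R] [Field K] [Algebra R K] [IsFractionRing R K]

theorem locSet_eq_ofField (P : Ideal R) [P.IsPrime] :
    locSet R K P =
      Localization.subalgebra.ofField K P.primeCompl P.primeCompl_le_nonZeroDivisors := by
  ext x
  have hs (s : R) (hsP : s ∉ P) : algebraMap R K s ≠ 0 :=
    (map_ne_zero_iff _ (IsFractionRing.injective R K)).mpr fun h => hsP (h ▸ P.zero_mem)
  constructor
  · rintro ⟨s, hsP, r, h⟩
    exact ⟨r, s, hsP, by rw [← h, mul_inv_cancel_right₀ (hs s hsP)]⟩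
  · rintro ⟨r, s, hsP, rfl⟩
    exact ⟨s, hsP, r, inv_mul_cancel_right₀ (hs s hsP) _⟩

theorem valuationRing_atPrime_iff (P : Ideal R) [P.IsPrime] :
    ValuationRing (Localization.AtPrime P) ↔ ∀ x : K, x ∈ locSet R K P ∨ x⁻¹ ∈ locSet R K P := by
  set S := Localization.subalgebra.ofField K P.primeCompl P.primeCompl_le_nonZeroDivisors
  let e : Localization.AtPrime P ≃ₐ[R] S := IsLocalization.algEquiv P.primeCompl _ _
  have hS : ∀ x : K, IsLocalization.IsInteger S x ↔ x ∈ locSet R K P := fun x => by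
    rw [locSet_eq_ofField]
    exact ⟨fun ⟨y, hy⟩ => hy ▸ y.2, fun hx => ⟨⟨x, hx⟩, rfl⟩⟩
  rw [← forall_congr' fun x => or_congr (hS x) (hS x⁻¹),
    ← ValuationRing.iff_isInteger_or_isInteger]
  exact ⟨fun _ => e.surjective.valuationRing e.toRingHom,
    fun _ => e.symm.surjective.valuationRing e.symm.toRingHom⟩

end Localization

section Overring

variable {R K : Type*} [CommRing R] [Field K] [Algebra R K]

theorem mem_locSet_comap_of_inv_mem {T : Subalgebra R K} (Q : Ideal T) {u : K} (hu : u ∈ T)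
    (h : u⁻¹ ∈ locSet R K (Q.comap (algebraMap R T))) :
    u ∈ locSet R K (Q.comap (algebraMap R T)) := by
  obtain ⟨s, hs, r, hsr⟩ := h
  rcases eq_or_ne u 0 with rfl | hu0
  · exact ⟨s, hs, 0, by simp⟩
  have hur : u * algebraMap R K r = algebraMap R K s := by
    rw [← hsr, ← mul_assoc, mul_inv_cancel₀ hu0, one_mul]
  refine ⟨r, fun hr => hs ?_, s, hur⟩
  have : (⟨u, hu⟩ : T) * algebraMap R T r = algebraMap R T s := Subtype.ext hur
  exact Ideal.mem_comap.mpr (this ▸ Q.mul_mem_left _ hr)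

theorem coe_eq_iInter_locSet (T : Subalgebra R K)
    (hT : ∀ M : Ideal T, M.IsMaximal → (T : Set K) ⊆ locSet R K (M.comap (algebraMap R T))) :
    (T : Set K) = ⋂ P ∈ {P : Ideal R | P.IsPrime ∧ (T : Set K) ⊆ locSet R K P}, locSet R K P := by
  refine subset_antisymm (fun x hx => Set.mem_iInter₂.mpr fun P hP => hP.2 hx) fun x hx => ?_
  by_contra hxT
  have hI : condIdeal T K {x} ≠ ⊤ := fun h => hxT <| by
    obtain ⟨y, hy⟩ := (h ▸ Submodule.mem_top : (1 : T) ∈ condIdeal T K {x}) x rfl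
    rw [map_one, one_mul] at hy
    exact hy ▸ y.2
  obtain ⟨M, hM, hIM⟩ := (condIdeal T K {x}).exists_le_maximal hI
  obtain ⟨s, hs, r, hsr⟩ := Set.mem_iInter₂.mp hx _ ⟨Ideal.comap_isPrime _ M, hT M hM⟩
  refine hs (hIM fun y hy => ⟨algebraMap R T r, ?_⟩)
  rw [Set.mem_singleton_iff.mp hy, mul_comm]
  exact hsr

end Overring

theorem isSQQR_of_isPrufer {R : Type*} [CommRing R] [IsDomain R] (h : IsPrufer R) : IsSQQR R := by
  intro u
  set T := Algebra.adjoin R {u}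
  refine ⟨_, fun P hP => hP.1, coe_eq_iInter_locSet T fun M hM => ?_⟩
  set P := M.comap (algebraMap R T)
  have hu : u ∈ locSet R (FractionRing R) P :=
    ((valuationRing_atPrime_iff P).mp (h P inferInstance) u).elim id
      (mem_locSet_comap_of_inv_mem M (Algebra.self_mem_adjoin_singleton R u))
  rw [locSet_eq_ofField] at hu ⊢
  exact Algebra.adjoin_le (Set.singleton_subset_iff.mpr hu)

section Integral

variable {A K : Type*} [CommRing A] [Field K] [Algebra A K]

theorem aeval_mul_zpow_mem {v : K} (hv : v ≠ 0) {p : A[X]} {e : ℤ} {N : Submodule A K}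
    (h : ∀ i ≤ p.natDegree, v ^ ((i : ℤ) + e) ∈ N) : aeval v p * v ^ e ∈ N := by
  rw [aeval_eq_sum_range, Finset.sum_mul]
  refine N.sum_mem fun i hi => ?_
  rw [smul_mul_assoc, ← zpow_natCast, ← zpow_add₀ hv]
  exact N.smul_mem _ (h i (Nat.lt_succ_iff.mp (Finset.mem_range.mp hi)))

/-- The `A`-module spanned by `u ^ e`, `-deg q ≤ e ≤ deg p`, is stable under multiplication by
`z = p(u) = q(u⁻¹)`. -/
theorem isIntegral_of_mem_adjoin_of_mem_adjoin_inv {u z : K} (hu : u ≠ 0)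
    (h₁ : z ∈ Algebra.adjoin A {u}) (h₂ : z ∈ Algebra.adjoin A {u⁻¹}) : IsIntegral A z := by
  rw [Algebra.adjoin_singleton_eq_range_aeval, AlgHom.mem_range] at h₁ h₂
  obtain ⟨p, rfl⟩ := h₁
  obtain ⟨q, hq⟩ := h₂
  set N := Submodule.span A ((u ^ ·) '' Set.Icc (-(q.natDegree : ℤ)) p.natDegree)
  have hmem : ∀ e ∈ Set.Icc (-(q.natDegree : ℤ)) p.natDegree, u ^ e ∈ N :=
    fun e he => Submodule.subset_span ⟨e, he, rfl⟩
  have hstable : ∀ e ∈ Set.Icc (-(q.natDegree : ℤ)) p.natDegree, aeval u p * u ^ e ∈ N := by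
    rintro e ⟨he₁, he₂⟩
    rcases lt_or_ge e 0 with he | he
    · exact aeval_mul_zpow_mem hu fun i hi => hmem _ ⟨by omega, by omega⟩
    · have := aeval_mul_zpow_mem (inv_ne_zero hu) (p := q) (e := -e) (N := N)
        fun i hi => by rw [inv_zpow', neg_add, neg_neg]; exact hmem _ ⟨by omega, by omega⟩
      rwa [hq, inv_zpow', neg_neg] at this
  refine isIntegral_of_smul_mem_submodule N (fun hN => one_ne_zero (α := K) ?_) (Submodule.fg_span
    ((Set.finite_Icc _ _).image _)) _ fun n hn => ?_
  · have := hmem 0 ⟨by omega, by omega⟩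
    rwa [zpow_zero, hN, Submodule.mem_bot] at this
  induction hn using Submodule.span_induction with
  | mem x hx =>
    obtain ⟨e, he, rfl⟩ := hx
    exact hstable e he
  | zero => simp
  | add x y _ _ hx hy => rw [smul_add]; exact N.add_mem hx hy
  | smul a x _ hx => rw [smul_comm]; exact N.smul_mem a hx

end Integral

section Divide

variable {A B : Type*} [CommRing A] [CommRing B] [Algebra A B]

theorem coeff_iterate_divX (p : A[X]) (m i : ℕ) : (divX^[m] p).coeff i = p.coeff (i + m) := by
  induction m generalizing i with
  | zero => rfl
  | succ m ih => rw [Function.iterate_succ_apply', coeff_divX, ih, add_right_comm, add_assoc]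

theorem aeval_eq_mul_aeval_divX_add (x : B) (p : A[X]) :
    aeval x p = x * aeval x (divX p) + algebraMap A B (p.coeff 0) := by
  conv_lhs => rw [← divX_mul_X_add p]
  rw [map_add, map_mul, aeval_X, aeval_C, mul_comm]

end Divide

section Dichotomy

variable {R K : Type*} [CommRing R] [Field K] [Algebra R K] [IsFractionRing R K]
  [IsIntegrallyClosed R] {P : Ideal R}

theorem mem_map_of_notMem_locSet {u w : K} (hu : u ≠ 0) (h₁ : u ∉ locSet R K P)
    (h₂ : u⁻¹ ∉ locSet R K P) (hw : IsIntegral R w) (huw : IsIntegral R (u * w)) :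
    w ∈ Submodule.map (Algebra.linearMap R K) P ∧
      u * w ∈ Submodule.map (Algebra.linearMap R K) P := by
  obtain ⟨b, rfl⟩ := IsIntegrallyClosed.isIntegral_iff.mp hw
  obtain ⟨c, hc⟩ := IsIntegrallyClosed.isIntegral_iff.mp huw
  refine ⟨⟨b, ?_, rfl⟩, ⟨c, ?_, hc⟩⟩
  · by_contra hb
    exact h₁ ⟨b, hb, c, hc.symm⟩
  · by_contra hc'
    exact h₂ ⟨c, hc', b, by rw [hc, inv_mul_cancel_left₀ hu]⟩

/-- Kaplansky's argument: the values `zₘ = (divX^[m] f)(u)` lie in `R[u] ∩ R[u⁻¹]`, as do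
`u zₘ₊₁ = zₘ - aₘ`; if neither `u` nor `u⁻¹` is in `R_P`, integrality forces all of them, hence
all coefficients `aₘ = zₘ - u zₘ₊₁`, into `P`. -/
theorem mem_locSet_or_inv_mem_locSet_of_aeval_eq_zero {u : K} {f : R[X]} (hf : aeval u f = 0)
    {j : ℕ} (hj : f.coeff j ∉ P) : u ∈ locSet R K P ∨ u⁻¹ ∈ locSet R K P := by
  rcases eq_or_ne u 0 with rfl | hu
  · exact .inl ⟨1, fun h => hj (P.eq_top_of_isUnit_mem h isUnit_one ▸ Submodule.mem_top), 0,
      by simp⟩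
  by_contra! hne
  set N := Submodule.map (Algebra.linearMap R K) P
  set z : ℕ → K := fun m => aeval u (divX^[m] f)
  have hz (m : ℕ) : u * z (m + 1) = z m - algebraMap R K (f.coeff m) := by
    simp only [z, aeval_eq_mul_aeval_divX_add u (divX^[m] f), Function.iterate_succ_apply',
      coeff_iterate_divX, zero_add, add_sub_cancel_right]
  have hz_inv (m : ℕ) : z m ∈ Algebra.adjoin R {u⁻¹} := by
    induction m with
    | zero => simp [z, hf]
    | succ m ih =>
      rw [← inv_mul_cancel_left₀ hu (z (m + 1)), hz]
      exact mul_mem (Algebra.self_mem_adjoin_singleton R _) (sub_mem ih (algebraMap_mem _ _))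
  have hzN (m : ℕ) : z (m + 1) ∈ N ∧ u * z (m + 1) ∈ N :=
    mem_map_of_notMem_locSet hu hne.1 hne.2
      (isIntegral_of_mem_adjoin_of_mem_adjoin_inv hu (aeval_mem_adjoin_singleton R u)
        (hz_inv _))
      (isIntegral_of_mem_adjoin_of_mem_adjoin_inv hu
        (mul_mem (Algebra.self_mem_adjoin_singleton R u) (aeval_mem_adjoin_singleton R u))
        (hz m ▸ sub_mem (hz_inv m) (algebraMap_mem _ _)))
  have hzN' : ∀ m, z m ∈ N
    | 0 => by simp [z, hf]
    | m + 1 => (hzN m).1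
  have hcoeff : algebraMap R K (f.coeff j) = z j - u * z (j + 1) := by rw [hz]; ring
  obtain ⟨a, ha, hae⟩ := Submodule.mem_map.mp (hcoeff ▸ sub_mem (hzN' j) (hzN j).2)
  exact hj (IsFractionRing.injective R K hae ▸ ha)

end Dichotomy

section SimpleOverring

variable {R K : Type*} [CommRing R] [Field K] [Algebra R K] [IsFractionRing R K]

/-- If `s (x + x²) = r` then `s x` is a root of the monic `X² + s X - s r`. -/
theorem mem_locSet_of_add_sq_mem [IsIntegrallyClosed R] {P : Ideal R} {x : K}
    (h : x + x ^ 2 ∈ locSet R K P) : x ∈ locSet R K P := by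
  obtain ⟨s, hs, r, hsr⟩ := h
  have hint : IsIntegral R (algebraMap R K s * x) := by
    refine ⟨X ^ 2 + C s * X - C (s * r), by monicity!, ?_⟩
    rw [← aeval_def]
    simp only [map_sub, map_add, map_pow, aeval_X, aeval_C, map_mul]
    linear_combination algebraMap R K s * hsr
  obtain ⟨w, hw⟩ := IsIntegrallyClosed.isIntegral_iff.mp hint
  exact ⟨s, hs, w, by rw [hw, mul_comm]⟩

theorem exists_coeff_comp_add_sq_sub_X_notMem {P : Ideal R} (hP : P ≠ ⊤) (q : R[X]) :
    ∃ j, (q.comp (X + X ^ 2) - X).coeff j ∉ P := by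
  by_contra! h
  have heval (r : R) : (q.comp (X + X ^ 2) - X).eval r ∈ P := by
    rw [eval_eq_sum_range]
    exact P.sum_mem fun i _ => P.mul_mem_right _ (h i)
  have hone : (q.comp (X + X ^ 2) - X).eval (-1) - (q.comp (X + X ^ 2) - X).eval 0 = 1 := by
    simp
  exact hP ((P.eq_top_iff_one).mpr (hone ▸ P.sub_mem (heval _) (heval _)))

end SimpleOverring

theorem mem_adjoin_add_sq {R : Type*} [CommRing R] [IsDomain R] [IsIntegrallyClosed R]
    (h : IsSQQR R) (x : FractionRing R) : x ∈ Algebra.adjoin R {x + x ^ 2} := by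
  obtain ⟨Ps, -, hPs⟩ := h (x + x ^ 2)
  have hx := (Algebra.self_mem_adjoin_singleton R (x + x ^ 2) : x + x ^ 2 ∈ _)
  rw [← SetLike.mem_coe, hPs, Set.mem_iInter₂] at hx ⊢
  exact fun P hP => mem_locSet_of_add_sq_mem (hx P hP)

theorem isPrufer_of_isSQQR {R : Type*} [CommRing R] [IsDomain R] [IsIntegrallyClosed R]
    (h : IsSQQR R) : IsPrufer R := by
  intro P hP
  refine (valuationRing_atPrime_iff (K := FractionRing R) P).mpr fun x => ?_
  have hx := mem_adjoin_add_sq h x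
  rw [Algebra.adjoin_singleton_eq_range_aeval, AlgHom.mem_range] at hx
  obtain ⟨q, hq⟩ := hx
  obtain ⟨j, hj⟩ := exists_coeff_comp_add_sq_sub_X_notMem hP.ne_top q
  exact mem_locSet_or_inv_mem_locSet_of_aeval_eq_zero (by simp [aeval_comp, hq]) hj

theorem stmt6 (R : Type*) [CommRing R] [IsDomain R] [IsIntegrallyClosed R] :
    IsPrufer R ↔ IsSQQR R :=
  ⟨isSQQR_of_isPrufer, isPrufer_of_isSQQR⟩

end
end

section
/- Let R be an sQQR-domain which is not integrally closed, let x be an element of the integral closure of R not in R, and let 𝒫 be the set of primes of R not containing (R :_R x). Then the union of the primes in 𝒫 is exactly the set of nonunits of R. -/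
noncomputable section

section Conductor

variable {A L : Type*} [CommRing A] [CommRing L] [Algebra A L]

theorem condIdeal_singleton_not_le_of_mem_locSet {P : Ideal A} {u : L}
    (hu : u ∈ locSet A L P) : ¬ condIdeal A L {u} ≤ P := by
  obtain ⟨s, hsP, r, hsr⟩ := hu
  refine fun hle ↦ hsP (hle ?_)
  rintro _ rfl
  exact ⟨r, by rw [mul_comm, hsr]⟩

theorem inv_mem_locSet {K : Type*} [Field K] [Algebra A K] {P : Ideal A} {r : A}
    (hr : algebraMap A K r ≠ 0) (hrP : r ∉ P) : (algebraMap A K r)⁻¹ ∈ locSet A K P :=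
  ⟨r, hrP, 1, by rw [inv_mul_cancel₀ hr, map_one]⟩

theorem condIdeal_singleton_ne_bot [IsDomain A] {K : Type*} [CommRing K] [Algebra A K]
    [IsFractionRing A K] (u : K) : condIdeal A K {u} ≠ ⊥ := by
  obtain ⟨b, r, hbr⟩ := IsLocalization.exists_integer_multiple (nonZeroDivisors A) u
  have hb : (b : A) ∈ condIdeal A K {u} := by
    rintro _ rfl
    exact ⟨r, by rw [hbr, Algebra.smul_def]⟩
  exact fun h ↦ nonZeroDivisors.coe_ne_zero b ((Submodule.eq_bot_iff _).mp h _ hb)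

end Conductor

theorem isUnit_of_isIntegral_inv {A K : Type*} [CommRing A] [Field K] [Algebra A K]
    [FaithfulSMul A K] {r : A} (hr : r ≠ 0) (hint : IsIntegral A (algebraMap A K r)⁻¹) :
    IsUnit r := by
  have hr' : algebraMap A K r ≠ 0 :=
    (map_ne_zero_iff _ (FaithfulSMul.algebraMap_injective A K)).mpr hr
  have : FaithfulSMul A (integralClosure A K) :=
    (faithfulSMul_iff_algebraMap_injective _ _).mpr fun a b h ↦
      FaithfulSMul.algebraMap_injective A K (congrArg Subtype.val h)
  have hunit : IsUnit (algebraMap A (integralClosure A K) r) :=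
    .of_mul_eq_one ⟨_, hint⟩ (Subtype.ext (mul_inv_cancel₀ hr'))
  exact (isUnit_map_iff _ r).mp hunit

/- If a nonzero nonunit `r` avoided all these primes, then `r⁻¹` would lie in every localization
representing `A[u]`, hence in `A[u]`, and so be integral over `A`. -/
theorem IsSQQR.exists_isPrime_not_condIdeal_le_mem {A : Type*} [CommRing A] [IsDomain A]
    (hA : IsSQQR A) {u : FractionRing A} (hu : IsIntegral A u) {r : A} (hr : ¬ IsUnit r) :
    ∃ P : Ideal A, P.IsPrime ∧ ¬ condIdeal A (FractionRing A) {u} ≤ P ∧ r ∈ P := by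
  rcases eq_or_ne r 0 with rfl | hr0
  · exact ⟨⊥, Ideal.isPrime_bot,
      fun h ↦ condIdeal_singleton_ne_bot u (le_bot_iff.mp h), rfl⟩
  by_contra! havoid
  obtain ⟨Ps, hPs, hadj⟩ := hA u
  have hu_loc : ∀ P ∈ Ps, u ∈ locSet A (FractionRing A) P := by
    refine Set.mem_iInter₂.mp ?_
    rw [← hadj]
    exact Algebra.self_mem_adjoin_singleton A u
  have hr_inv : (algebraMap A (FractionRing A) r)⁻¹ ∈ Algebra.adjoin A {u} := by
    rw [← SetLike.mem_coe, hadj, Set.mem_iInter₂]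
    exact fun P hP ↦ inv_mem_locSet ((map_ne_zero_iff _ (IsFractionRing.injective A _)).mpr hr0)
      (havoid P (hPs P hP) (condIdeal_singleton_not_le_of_mem_locSet (hu_loc P hP)))
  exact hr <| isUnit_of_isIntegral_inv hr0 <|
    IsIntegral.of_mem_of_fg _ hu.fg_adjoin_singleton _ hr_inv

theorem stmt7_general (R : Type*) [CommRing R] [IsDomain R] (h1 : IsSQQR R)
    (x : FractionRing R)
    (hx : x ∈ integralClosure R (FractionRing R)) :
    (⋃ P ∈ {P : Ideal R | P.IsPrime ∧ ¬ condIdeal R (FractionRing R) {x} ≤ P}, (P : Set R)) =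
      {r : R | ¬ IsUnit r} := by
  ext r
  simp only [Set.mem_iUnion, Set.mem_ofPred_eq, SetLike.mem_coe, exists_prop]
  constructor
  · rintro ⟨P, ⟨hP, -⟩, hrP⟩ hunit
    exact hP.ne_top (Ideal.eq_top_of_isUnit_mem P hrP hunit)
  · intro hr
    obtain ⟨P, hP, hcond, hrP⟩ := h1.exists_isPrime_not_condIdeal_le_mem hx hr
    exact ⟨P, ⟨hP, hcond⟩, hrP⟩

theorem stmt7 (R : Type*) [CommRing R] [IsDomain R] (h1 : IsSQQR R)
    (h2 : ¬ IsIntegrallyClosed R) (x : FractionRing R)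
    (hx : x ∈ integralClosure R (FractionRing R)) (hxR : x ∉ imageR R (FractionRing R)) :
    (⋃ P ∈ {P : Ideal R | P.IsPrime ∧ ¬ condIdeal R (FractionRing R) {x} ≤ P}, (P : Set R)) =
      {r : R | ¬ IsUnit r} :=
  stmt7_general R h1 x hx

end
end

section
/- Let (R, M) be a local sQQR-domain which is not integrally closed. Then R has Krull dimension at least 2, and M is not minimal over any nonzero principal ideal. -/
noncomputable section

/-!
Take `u` integral over `R` with `u ∉ R` and write `R[u] = ⋂ R_P`. The maximal ideal cannot occur
among the `P`, since `R_M = R`. If `M` were minimal over `(a)` with `a ≠ 0`, then `a` would avoid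
every other prime, so `a⁻¹ ∈ R[u]` would be integral over `R` and `a` a unit. Consequently a minimal
prime over `(b)`, for `b ∈ M` nonzero, lies strictly between `0` and `M`.
-/

lemma isUnit_of_isIntegral_of_mul_eq_one {R S : Type*} [CommRing R] [CommRing S] [Algebra R S]
    [FaithfulSMul R S] {a : R} {x : S} (hx : IsIntegral R x) (hxa : x * algebraMap R S a = 1) :
    IsUnit a := by
  have hinj : Function.Injective (algebraMap R (integralClosure R S)) := fun b c hbc =>
    FaithfulSMul.algebraMap_injective R S (congrArg Subtype.val hbc)
  have hunit : IsUnit (algebraMap R (integralClosure R S) a) :=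
    .of_mul_eq_one (⟨x, hx⟩ : integralClosure R S) (Subtype.ext (by simpa [mul_comm] using hxa))
  exact ((algebraMap_isIntegral_iff.mpr inferInstance).isLocalHom hinj).map_nonunit a hunit

open IsLocalRing

lemma locSet_maximalIdeal_subset_range (R K : Type*) [CommRing R] [IsLocalRing R] [CommRing K]
    [Algebra R K] : locSet R K (maximalIdeal R) ⊆ Set.range (algebraMap R K) := by
  rintro x ⟨s, hs, r, hr⟩
  obtain ⟨v, rfl⟩ : IsUnit s := of_not_not hs
  refine ⟨r * ↑v⁻¹, ?_⟩
  rw [map_mul, ← hr, mul_assoc, ← map_mul, Units.mul_inv, map_one, mul_one]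

lemma notMem_of_maximalIdeal_mem_minimalPrimes {R : Type*} [CommRing R] [IsLocalRing R] {a : R}
    (ha : maximalIdeal R ∈ (Ideal.span {a}).minimalPrimes) {P : Ideal R} [P.IsPrime]
    (hP : P ≠ maximalIdeal R) : a ∉ P := fun haP =>
  hP <| le_antisymm (le_maximalIdeal Ideal.IsPrime.ne_top')
    (ha.2 ⟨‹_›, Ideal.span_singleton_le_iff_mem P |>.mpr haP⟩ (le_maximalIdeal Ideal.IsPrime.ne_top'))

lemma maximalIdeal_notMem_minimalPrimes_of_adjoin_eq_iInter_locSet {R K : Type*} [CommRing R]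
    [IsLocalRing R] [Field K] [Algebra R K] [FaithfulSMul R K] {u : K} (hu : IsIntegral R u)
    (huR : u ∉ Set.range (algebraMap R K)) {Ps : Set (Ideal R)} (hPs : ∀ P ∈ Ps, P.IsPrime)
    (hEq : (Algebra.adjoin R {u} : Set K) = ⋂ P ∈ Ps, locSet R K P) {a : R} (ha : a ≠ 0) :
    maximalIdeal R ∉ (Ideal.span {a}).minimalPrimes := by
  intro hmin
  have hMPs : maximalIdeal R ∉ Ps := fun hM => by
    have hu' : u ∈ (Algebra.adjoin R {u} : Set K) := Algebra.self_mem_adjoin_singleton R u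
    rw [hEq] at hu'
    exact huR (locSet_maximalIdeal_subset_range R K (Set.mem_iInter₂.mp hu' _ hM))
  have hfa : algebraMap R K a ≠ 0 :=
    (map_ne_zero_iff _ (FaithfulSMul.algebraMap_injective R K)).mpr ha
  have hinv : (algebraMap R K a)⁻¹ ∈ (Algebra.adjoin R {u} : Set K) := by
    rw [hEq, Set.mem_iInter₂]
    intro P hP
    have := hPs P hP
    exact ⟨a, notMem_of_maximalIdeal_mem_minimalPrimes hmin (ne_of_mem_of_not_mem hP hMPs), 1,
      by rw [map_one, inv_mul_cancel₀ hfa]⟩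
  have haM : a ∈ maximalIdeal R := hmin.1.2 (Ideal.mem_span_singleton_self a)
  exact (mem_maximalIdeal a).mp haM <| isUnit_of_isIntegral_of_mul_eq_one
    (.of_mem_of_fg _ hu.fg_adjoin_singleton _ hinv) (inv_mul_cancel₀ hfa)

lemma two_le_ringKrullDim_of_forall_maximalIdeal_notMem_minimalPrimes {R : Type*} [CommRing R]
    [IsDomain R] [IsLocalRing R] (hR : ¬ IsField R)
    (h : ∀ a : R, a ≠ 0 → maximalIdeal R ∉ (Ideal.span {a}).minimalPrimes) :
    2 ≤ ringKrullDim R := by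
  obtain ⟨b, hbM, hb0⟩ := Submodule.exists_mem_ne_zero_of_ne_bot
    (mt isField_iff_maximalIdeal_eq.mpr hR)
  obtain ⟨Q, hQmin, hQM⟩ := Ideal.exists_minimalPrimes_le
    ((Ideal.span_singleton_le_iff_mem _).mpr hbM)
  have hQ : Q.IsPrime := hQmin.1.1
  have hbQ : b ∈ Q := hQmin.1.2 (Ideal.mem_span_singleton_self b)
  have hQ0 : (⊥ : Ideal R) < Q :=
    bot_lt_iff_ne_bot.mpr fun hQbot => hb0 (Ideal.mem_bot.mp (hQbot ▸ hbQ))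
  have hQM' : Q < maximalIdeal R := lt_of_le_of_ne hQM fun hQeq => h b hb0 (hQeq ▸ hQmin)
  have hheight : 1 < Order.height (⟨maximalIdeal R, inferInstance⟩ : PrimeSpectrum R) :=
    Order.one_lt_height_iff.mpr ⟨⟨Q, hQ⟩, ⟨⊥, Ideal.isPrime_bot⟩, hQ0, hQM'⟩
  calc (2 : WithBot ℕ∞) = ((1 + 1 : ℕ∞) : WithBot ℕ∞) := rfl
    _ ≤ Order.height (⟨maximalIdeal R, inferInstance⟩ : PrimeSpectrum R) :=
        WithBot.coe_le_coe.mpr ((ENat.add_one_le_iff ENat.one_ne_top).mpr hheight)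
    _ ≤ ringKrullDim R := Order.height_le_krullDim _

theorem stmt9 (R : Type*) [CommRing R] [IsDomain R] [IsLocalRing R] (h1 : IsSQQR R)
    (h2 : ¬ IsIntegrallyClosed R) :
    2 ≤ ringKrullDim R ∧
      ∀ a : R, a ≠ 0 → IsLocalRing.maximalIdeal R ∉ (Ideal.span {a}).minimalPrimes := by
  obtain ⟨u, hu, huR⟩ : ∃ u : FractionRing R, IsIntegral R u ∧
      u ∉ Set.range (algebraMap R (FractionRing R)) := by
    simpa [isIntegrallyClosed_iff (FractionRing R)] using h2
  obtain ⟨Ps, hPs, hEq⟩ := h1 u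
  have hM := fun a ha =>
    maximalIdeal_notMem_minimalPrimes_of_adjoin_eq_iInter_locSet hu huR hPs hEq (a := a) ha
  have hR : ¬ IsField R := fun hR => h2 (by let := hR.toField; infer_instance)
  exact ⟨two_le_ringKrullDim_of_forall_maximalIdeal_notMem_minimalPrimes hR hM, hM⟩

end
end

section
/- If R_M is an sQQR-domain for every maximal ideal M of the integral domain R, then R is an sQQR-domain. -/
/-!
Simple overrings are determined locally: inside the fraction field `K`, `R[u] = ⋂_M R_M[u]`
over the maximal ideals `M`, because an `x` such that `s • x ∈ R[u]` for some `s ∉ M`, for every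
`M`, lies in `R[u]`. As `K` is also the fraction field of `R_M`, the hypothesis writes `R_M[u]`
as an intersection of localizations `(R_M)_Q`, and `(R_M)_Q = R_{Q ∩ R}` inside `K`. Collecting
the primes `Q ∩ R` over all `M` writes `R[u]` as an intersection of localizations of `R`.
-/

noncomputable section

open Algebra

theorem locSet_comap_algebraMap {R S L : Type*} [CommRing R] [CommRing S] [CommRing L]
    [Algebra R S] [Algebra R L] [Algebra S L] [IsScalarTower R S L]
    (W : Submonoid R) [IsLocalization W S] (Q : Ideal S) [Q.IsPrime] :
    locSet R L (Q.comap (algebraMap R S)) = locSet S L Q := by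
  ext x
  constructor
  · rintro ⟨s, hs, r, hx⟩
    refine ⟨algebraMap R S s, hs, algebraMap R S r, ?_⟩
    simpa only [← IsScalarTower.algebraMap_apply] using hx
  · rintro ⟨s, hs, r, hx⟩
    obtain ⟨⟨s', t⟩, hst⟩ := IsLocalization.surj W s
    obtain ⟨⟨r', t'⟩, hrt⟩ := IsLocalization.surj W r
    have map_notMem {w : R} (hw : w ∈ W) : algebraMap R S w ∉ Q :=
      fun hwQ => ‹Q.IsPrime›.ne_top <|
        Q.eq_top_of_isUnit_mem hwQ (IsLocalization.map_units S ⟨w, hw⟩)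
    refine ⟨s' * t', ?_, r' * t, ?_⟩
    · rw [Ideal.mem_comap, map_mul, ← hst]
      intro hmem
      rcases ‹Q.IsPrime›.mem_or_mem hmem with h | h
      · rcases ‹Q.IsPrime›.mem_or_mem h with h | h
        exacts [hs h, map_notMem t.2 h]
      · exact map_notMem t'.2 h
    · simp only [IsScalarTower.algebraMap_apply R S L, map_mul, ← hst, ← hrt] at hx ⊢
      linear_combination
        (algebraMap S L (algebraMap R S t) * algebraMap S L (algebraMap R S t')) * hx

theorem locSet_preimage_algEquiv {A L L' : Type*} [CommRing A] [CommRing L] [CommRing L']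
    [Algebra A L] [Algebra A L'] (e : L ≃ₐ[A] L') (P : Ideal A) :
    e ⁻¹' locSet A L' P = locSet A L P := by
  ext x
  refine exists_congr fun s => and_congr_right fun _ => exists_congr fun r => ?_
  rw [← e.injective.eq_iff, map_mul, e.commutes, e.commutes]

theorem coe_adjoin_singleton_eq_preimage_algEquiv {A L L' : Type*} [CommSemiring A]
    [Semiring L] [Semiring L'] [Algebra A L] [Algebra A L'] (e : L ≃ₐ[A] L') (u : L) :
    (adjoin A {u} : Set L) = e ⁻¹' adjoin A {e u} := by
  rw [← Set.image_singleton, ← AlgEquiv.coe_toAlgHom, adjoin_image, Subalgebra.coe_map,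
    AlgEquiv.coe_toAlgHom, Set.preimage_image_eq _ e.injective]

theorem IsSQQR.exists_coe_adjoin_eq_iInter_locSet {R S K : Type*} [CommRing R] [CommRing S]
    [IsDomain S] [Field K] [Algebra R S] [Algebra R K] [Algebra S K] [IsScalarTower R S K]
    [IsFractionRing S K] (W : Submonoid R) [IsLocalization W S] (hS : IsSQQR S) (u : K) :
    ∃ Ps : Set (Ideal R), (∀ P ∈ Ps, P.IsPrime) ∧
      (adjoin S {u} : Set K) = ⋂ P ∈ Ps, locSet R K P := by
  let e := IsLocalization.algEquiv (nonZeroDivisors S) (FractionRing S) K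
  obtain ⟨Qs, hQs, hadj⟩ := hS (e.symm u)
  refine ⟨Ideal.comap (algebraMap R S) '' Qs, ?_, ?_⟩
  · rintro _ ⟨Q, hQ, rfl⟩
    have := hQs Q hQ
    exact Ideal.comap_isPrime _ Q
  · rw [Set.biInter_image, coe_adjoin_singleton_eq_preimage_algEquiv e.symm, hadj,
      Set.preimage_iInter₂]
    refine Set.iInter₂_congr fun Q hQ => ?_
    have := hQs Q hQ
    rw [locSet_preimage_algEquiv, locSet_comap_algebraMap W]

theorem Submodule.mem_of_forall_isMaximal_exists_smul_mem {R M : Type*} [CommSemiring R]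
    [AddCommMonoid M] [Module R M] (N : Submodule R M) (m : M)
    (h : ∀ P : Ideal R, P.IsMaximal → ∃ s ∉ P, s • m ∈ N) : m ∈ N := by
  let I : Ideal R := N.comap (LinearMap.toSpanSingleton R M m)
  suffices I = ⊤ by simpa [I] using I.eq_top_iff_one.mp this
  by_contra hI
  obtain ⟨P, hP, hIP⟩ := I.exists_le_maximal hI
  obtain ⟨s, hsP, hs⟩ := h P hP
  exact hsP (hIP hs)

theorem coe_adjoin_singleton_eq_iInter_isMaximal (R : Type*) [CommRing R] [IsDomain R]
    (u : FractionRing R) :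
    (adjoin R {u} : Set (FractionRing R)) =
      ⋂ (M : Ideal R) (_ : M.IsMaximal), (adjoin (Localization.AtPrime M) {u} : Set _) := by
  ext x
  simp only [Set.mem_iInter, SetLike.mem_coe]
  refine ⟨fun hx M _ => ?_, fun hx => ?_⟩
  · rw [← adjoin_adjoin_of_tower R]
    exact subset_adjoin hx
  · refine (adjoin R {u}).toSubmodule.mem_of_forall_isMaximal_exists_smul_mem x fun M hM => ?_
    obtain ⟨⟨s, hs⟩, hsx⟩ := multiple_mem_adjoin_of_mem_localization_adjoin M.primeCompl
      (Localization.AtPrime M) _ x (hx M hM)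
    exact ⟨s, hs, hsx⟩

theorem stmt10 (R : Type*) [CommRing R] [IsDomain R]
    (h : ∀ (M : Ideal R) (hM : M.IsMaximal),
      haveI := hM.isPrime
      letI : IsDomain (Localization.AtPrime M) :=
        IsLocalization.isDomain_of_local_atPrime hM.isPrime
      IsSQQR (Localization.AtPrime M)) :
    IsSQQR R := by
  intro u
  choose Ps hPs hadj using fun (M : Ideal R) (hM : M.IsMaximal) =>
    (h M hM).exists_coe_adjoin_eq_iInter_locSet M.primeCompl u
  refine ⟨⋃ (M : Ideal R) (hM : M.IsMaximal), Ps M hM, ?_, ?_⟩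
  · simp only [Set.mem_iUnion]
    rintro P ⟨M, hM, hP⟩
    exact hPs M hM P hP
  · simp only [coe_adjoin_singleton_eq_iInter_isMaximal, Set.biInter_iUnion]
    exact Set.iInter₂_congr hadj

end
end

section
/- Let (R, M) be a local sQQR-domain with R ⊊ Ω(M). Then Ω(M) is the unique minimal overring of R: every overring of R properly containing R contains Ω(M). -/
noncomputable section

theorem stmt11 (R : Type*) [CommRing R] [IsDomain R] [IsLocalRing R] (h1 : IsSQQR R)
    (h2 : imageR R (FractionRing R) ⊂
      omegaSet R (FractionRing R) (IsLocalRing.maximalIdeal R)) :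
    ∀ T : Subring (FractionRing R), imageR R (FractionRing R) ⊆ ↑T →
      imageR R (FractionRing R) ≠ ↑T →
      omegaSet R (FractionRing R) (IsLocalRing.maximalIdeal R) ⊆ ↑T := by
  intro T hsub hne x hx
  -- pick u ∈ T \ imageR
  obtain ⟨u, huT, huR⟩ : ∃ u : FractionRing R, u ∈ (T : Set (FractionRing R)) ∧
      u ∉ imageR R (FractionRing R) := by
    by_contra hc
    push_neg at hc
    exact hne (Set.Subset.antisymm hsub (fun y hy => hc y hy))
  obtain ⟨Ps, hprime, hadj⟩ := h1 u
  -- locSet at the maximal ideal is just the image of R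
  have hlocM : locSet R (FractionRing R) (IsLocalRing.maximalIdeal R) ⊆
      imageR R (FractionRing R) := by
    rintro y ⟨s, hs, r, hy⟩
    have hsu : IsUnit s := by
      by_contra hns
      exact hs hns
    obtain ⟨w, hw⟩ := hsu
    refine ⟨r * ↑w⁻¹, ?_⟩
    have hs0 : algebraMap R (FractionRing R) s ≠ 0 := by
      intro h0
      have hz : s = 0 := (IsFractionRing.injective R (FractionRing R)) (by simpa using h0)
      exact hs (hz ▸ (IsLocalRing.maximalIdeal R).zero_mem)
    apply mul_right_cancel₀ hs0
    rw [hy, ← map_mul]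
    congr 1
    rw [← hw, mul_assoc]
    simp
  -- every P ∈ Ps is not the maximal ideal
  have hPne : ∀ P ∈ Ps, P ≠ IsLocalRing.maximalIdeal R := by
    intro P hP hPeq
    have hu' : u ∈ (↑(Algebra.adjoin R {u} : Subalgebra R (FractionRing R)) :
        Set (FractionRing R)) := Algebra.self_mem_adjoin_singleton R u
    rw [hadj] at hu'
    have := Set.mem_iInter₂.mp hu' P hP
    rw [hPeq] at this
    exact huR (hlocM this)
  -- Ω(M) ⊆ locSet P for every prime P ≠ M
  have hOm : ∀ P ∈ Ps, x ∈ locSet R (FractionRing R) P := by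
    intro P hP
    haveI := hprime P hP
    have hle : P ≤ IsLocalRing.maximalIdeal R :=
      IsLocalRing.le_maximalIdeal (hprime P hP).ne_top
    obtain ⟨a, haM, haP⟩ : ∃ a, a ∈ IsLocalRing.maximalIdeal R ∧ a ∉ P := by
      by_contra hc
      push_neg at hc
      exact hPne P hP (le_antisymm hle hc)
    obtain ⟨n, hn1, r, hr⟩ := hx a haM
    refine ⟨a ^ n, fun hmem => haP ((hprime P hP).mem_of_pow_mem n hmem), r, ?_⟩
    rw [map_pow, mul_comm]
    exact hr
  -- conclude: x ∈ R[u] ⊆ T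
  have hxadj : x ∈ (↑(Algebra.adjoin R {u} : Subalgebra R (FractionRing R)) :
      Set (FractionRing R)) := by
    rw [hadj]
    exact Set.mem_iInter₂.mpr hOm
  refine Algebra.adjoin_induction ?_ ?_ ?_ ?_ hxadj
  · rintro y (rfl : y = u)
    exact huT
  · intro r
    exact hsub ⟨r, rfl⟩
  · intro a b _ _ ha hb
    exact T.add_mem ha hb
  · intro a b _ _ ha hb
    exact T.mul_mem ha hb

end
end

section
/- Let (R, M) be a local sQQR-domain with R ⊊ Ω(M). Then Ω(M) is itself an sQQR-domain. -/
noncomputable section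

/-- The Kaplansky transform as a subring of `L`. -/
def omegaSubring (A L : Type*) [CommRing A] [Field L] [Algebra A L] (I : Ideal A) : Subring L where
  carrier := omegaSet A L I
  zero_mem' := fun a _ => ⟨1, le_refl 1, 0, by simp⟩
  one_mem' := fun a _ => ⟨1, le_refl 1, a, by simp⟩
  add_mem' := by
    rintro x y hx hy a ha
    obtain ⟨n, hn, r, hr⟩ := hx a ha
    obtain ⟨m, hm, s, hs⟩ := hy a ha
    refine ⟨n + m, le_trans hn (Nat.le_add_right _ _), a ^ m * r + a ^ n * s, ?_⟩
    have h : (algebraMap A L a) ^ (n + m) * (x + y) =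
        (algebraMap A L a) ^ m * ((algebraMap A L a) ^ n * x) +
          (algebraMap A L a) ^ n * ((algebraMap A L a) ^ m * y) := by ring
    rw [h, hr, hs, map_add, map_mul, map_mul, map_pow, map_pow]
  neg_mem' := by
    rintro x hx a ha
    obtain ⟨n, hn, r, hr⟩ := hx a ha
    exact ⟨n, hn, -r, by rw [map_neg, mul_neg, hr]⟩
  mul_mem' := by
    rintro x y hx hy a ha
    obtain ⟨n, hn, r, hr⟩ := hx a ha
    obtain ⟨m, hm, s, hs⟩ := hy a ha
    refine ⟨n + m, le_trans hn (Nat.le_add_right _ _), r * s, ?_⟩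
    have h : (algebraMap A L a) ^ (n + m) * (x * y) =
        ((algebraMap A L a) ^ n * x) * ((algebraMap A L a) ^ m * y) := by ring
    rw [h, hr, hs, map_mul]

/-! Write `Ω = Ω(M)`. If `u ∈ R`, then `Ω[u] = Ω` is the intersection of its localizations at
maximal ideals. Otherwise `R[u] = ⋂_{P ∈ Ps} R_P`, and since `R_M = R` no `P` equals `M`; then
`Ω ⊆ R_P` for each `P`, so `Ω ⊆ R[u]` and `Ω[u] = R[u]`. Finally each `R_P` is also the
localization of `Ω` at the prime `P R_P ∩ Ω`. -/

section Transforms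

variable {A L : Type*} [CommRing A] [CommRing L] [Algebra A L]

theorem range_subset_omegaSet (I : Ideal A) : Set.range (algebraMap A L) ⊆ omegaSet A L I := by
  rintro x ⟨r, rfl⟩ a _
  exact ⟨1, le_rfl, a * r, by rw [pow_one, map_mul]⟩

theorem omegaSet_subset_locSet {I P : Ideal A} (hP : P.IsPrime) (hIP : ¬I ≤ P) :
    omegaSet A L I ⊆ locSet A L P := by
  obtain ⟨a, haI, haP⟩ := Set.not_subset.1 hIP
  intro x hx
  obtain ⟨n, -, r, hr⟩ := hx a haI
  exact ⟨a ^ n, fun h => haP (hP.mem_of_pow_mem n h), r, by rw [map_pow, mul_comm, hr]⟩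

theorem locSet_maximalIdeal_subset_range_s12 [IsLocalRing A] :
    locSet A L (IsLocalRing.maximalIdeal A) ⊆ Set.range (algebraMap A L) := by
  rintro x ⟨s, hs, r, hx⟩
  obtain ⟨v, rfl⟩ := IsLocalRing.notMem_maximalIdeal.1 hs
  refine ⟨r * ↑v⁻¹, ?_⟩
  rw [map_mul, ← hx, mul_assoc, ← map_mul, Units.mul_inv, map_one, mul_one]

theorem range_eq_iInter_locSet :
    Set.range (algebraMap A L) = ⋂ Q ∈ {Q : Ideal A | Q.IsMaximal}, locSet A L Q := by
  ext x
  refine ⟨?_, fun hx => ?_⟩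
  · rintro ⟨a, rfl⟩
    exact Set.mem_iInter₂.2 fun Q hQ => ⟨1, Q.ne_top_iff_one.1 hQ.ne_top, a, by simp⟩
  -- the conductor `(A :_A x)` lies in no maximal ideal
  have htop : condIdeal A L {x} = ⊤ := by
    by_contra hne
    obtain ⟨Q, hQ, hle⟩ := Ideal.exists_le_maximal _ hne
    obtain ⟨s, hs, r, hsx⟩ := Set.mem_iInter₂.1 hx Q hQ
    exact hs (hle fun u hu => ⟨r, by rw [Set.mem_singleton_iff.1 hu, mul_comm, hsx]⟩)
  obtain ⟨r, hr⟩ := (htop ▸ Submodule.mem_top : (1 : A) ∈ condIdeal A L {x}) x rfl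
  exact ⟨r, by rw [← hr, map_one, one_mul]⟩

end Transforms

section Transport

variable {A L L' : Type*} [CommRing A] [CommRing L] [CommRing L'] [Algebra A L] [Algebra A L']

theorem preimage_locSet {f : L →ₐ[A] L'} (hf : Function.Injective f) (P : Ideal A) :
    f ⁻¹' locSet A L' P = locSet A L P := by
  ext x
  refine ⟨fun ⟨s, hs, r, hx⟩ => ⟨s, hs, r, hf ?_⟩, fun ⟨s, hs, r, hx⟩ => ⟨s, hs, r, ?_⟩⟩
  · rwa [map_mul, f.commutes, f.commutes]
  · rw [← f.commutes s, ← f.commutes r, ← map_mul, hx]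

theorem preimage_adjoin_singleton {f : L →ₐ[A] L'} (hf : Function.Injective f) (u : L) :
    f ⁻¹' Algebra.adjoin A {f u} = Algebra.adjoin A {u} := by
  rw [← Set.image_singleton, ← AlgHom.map_adjoin, Subalgebra.coe_map, hf.preimage_image]

theorem isSQQR_of_isFractionRing [IsDomain A] [IsFractionRing A L]
    (h : ∀ u : L, ∃ Ps : Set (Ideal A), (∀ P ∈ Ps, P.IsPrime) ∧
      (Algebra.adjoin A {u} : Set L) = ⋂ P ∈ Ps, locSet A L P) :
    IsSQQR A := by
  intro u
  let e := (FractionRing.algEquiv A L).toAlgHom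
  have he : Function.Injective e := (FractionRing.algEquiv A L).injective
  obtain ⟨Ps, hPs, hu⟩ := h (e u)
  refine ⟨Ps, hPs, ?_⟩
  rw [← preimage_adjoin_singleton he, hu, Set.preimage_iInter₂]
  simp_rw [preimage_locSet he]

end Transport

section Subring

variable {A K : Type*} [CommRing A] [Field K] [Algebra A K] {S : Subring K}

theorem isFractionRing_of_range_subset [IsDomain A] [IsFractionRing A K]
    (hS : Set.range (algebraMap A K) ⊆ S) : IsFractionRing S K :=
  IsFractionRing.of_field S K fun z => by
    obtain ⟨x, y, -, hz⟩ := IsFractionRing.div_surjective (A := A) z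
    exact ⟨⟨_, hS ⟨x, rfl⟩⟩, ⟨_, hS ⟨y, rfl⟩⟩, hz.symm⟩

theorem coe_adjoin_subring_eq {u : K} (hAS : Set.range (algebraMap A K) ⊆ S)
    (hSA : (S : Set K) ⊆ Algebra.adjoin A {u}) :
    (Algebra.adjoin S {u} : Set K) = Algebra.adjoin A {u} := by
  rw [← Subalgebra.coe_toSubring, ← Subalgebra.coe_toSubring, Algebra.adjoin_eq_ring_closure,
    Algebra.adjoin_eq_ring_closure, show Set.range (algebraMap S K) = S from Subtype.range_coe]
  refine congrArg _ (le_antisymm (Subring.closure_le.2 (Set.union_subset ?_ ?_))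
    (Subring.closure_mono (Set.union_subset_union_left _ hAS)))
  · exact fun x hx => Algebra.mem_adjoin_iff.1 (hSA hx)
  · exact fun x hx => Subring.subset_closure (Or.inr hx)

end Subring

section Contraction

variable {A L : Type*} [CommRing A] [CommRing L] [Algebra A L] (S : Subring L) {P : Ideal A}

/-- The contraction `P A_P ∩ S` of the maximal ideal of `A_P` to an intermediate ring
`S ⊆ A_P`. -/
def contractLocIdeal (hP : P.IsPrime) (hS : (S : Set L) ⊆ locSet A L P) : Ideal S where
  carrier := {t | ∃ s ∉ P, ∃ r ∈ P, (t : L) * algebraMap A L s = algebraMap A L r}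
  zero_mem' := ⟨1, P.ne_top_iff_one.1 hP.ne_top, 0, P.zero_mem, by simp⟩
  add_mem' := by
    rintro a b ⟨s₁, hs₁, r₁, hr₁, ha⟩ ⟨s₂, hs₂, r₂, hr₂, hb⟩
    refine ⟨s₁ * s₂, hP.mul_notMem hs₁ hs₂, r₁ * s₂ + r₂ * s₁,
      P.add_mem (P.mul_mem_right _ hr₁) (P.mul_mem_right _ hr₂), ?_⟩
    simp only [Subring.coe_add, map_mul, map_add]
    linear_combination algebraMap A L s₂ * ha + algebraMap A L s₁ * hb
  smul_mem' := by
    rintro c t ⟨s, hs, r, hr, ht⟩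
    obtain ⟨s', hs', r', hc⟩ := hS c.2
    refine ⟨s * s', hP.mul_notMem hs hs', r * r', P.mul_mem_right _ hr, ?_⟩
    simp only [smul_eq_mul, Subring.coe_mul, map_mul]
    linear_combination ((c : L) * algebraMap A L s') * ht + algebraMap A L r * hc

variable (hP : P.IsPrime) (hS : (S : Set L) ⊆ locSet A L P)

theorem contractLocIdeal_isPrime (hinj : Function.Injective (algebraMap A L)) :
    (contractLocIdeal S hP hS).IsPrime := by
  refine ⟨fun h => ?_, fun {t₁ t₂} ⟨s, hs, r, hr, ht⟩ => ?_⟩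
  · obtain ⟨s, hs, r, hr, h1⟩ := (Ideal.eq_top_iff_one _).1 h
    rw [Subring.coe_one, one_mul] at h1
    exact hs (hinj h1 ▸ hr)
  obtain ⟨s₁, hs₁, r₁, h₁⟩ := hS t₁.2
  obtain ⟨s₂, hs₂, r₂, h₂⟩ := hS t₂.2
  have hrs : algebraMap A L (r₁ * r₂ * s) = algebraMap A L (r * (s₁ * s₂)) := by
    simp only [Subring.coe_mul, map_mul] at ht ⊢
    linear_combination (-(algebraMap A L r₂ * algebraMap A L s)) * h₁ -
      ((t₁ : L) * algebraMap A L s₁ * algebraMap A L s) * h₂ +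
      (algebraMap A L s₁ * algebraMap A L s₂) * ht
  have hr₁₂ : r₁ * r₂ ∈ P :=
    (hP.mem_or_mem (hinj hrs ▸ P.mul_mem_right _ hr)).resolve_right hs
  exact (hP.mem_or_mem hr₁₂).imp (fun h => ⟨s₁, hs₁, r₁, h, h₁⟩) (fun h => ⟨s₂, hs₂, r₂, h, h₂⟩)

theorem locSet_contractLocIdeal (hinj : Function.Injective (algebraMap A L))
    (hAS : Set.range (algebraMap A L) ⊆ S) :
    locSet S L (contractLocIdeal S hP hS) = locSet A L P := by
  ext x
  constructor
  · rintro ⟨σ, hσ, τ, hx⟩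
    obtain ⟨s₁, hs₁, r₁, h₁⟩ := hS σ.2
    obtain ⟨s₂, hs₂, r₂, h₂⟩ := hS τ.2
    have hr₁ : r₁ ∉ P := fun h => hσ ⟨s₁, hs₁, r₁, h, h₁⟩
    refine ⟨r₁ * s₂, hP.mul_notMem hr₁ hs₂, r₂ * s₁, ?_⟩
    change x * σ = τ at hx
    rw [map_mul, map_mul]
    linear_combination (-(algebraMap A L s₂ * x)) * h₁ + algebraMap A L s₁ * h₂ +
      (algebraMap A L s₁ * algebraMap A L s₂) * hx
  · rintro ⟨s, hs, r, hx⟩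
    refine ⟨⟨_, hAS ⟨s, rfl⟩⟩, fun ⟨s', hs', r', hr', h⟩ => hP.mul_notMem hs hs' ?_,
      ⟨_, hAS ⟨r, rfl⟩⟩, hx⟩
    rw [← map_mul] at h
    exact hinj h ▸ hr'

end Contraction

section Local

open IsLocalRing

variable {R : Type*} [CommRing R] [IsLocalRing R]

theorem omegaSet_subset_locSet_of_adjoin_eq_iInter {L : Type*} [CommRing L] [Algebra R L] {u : L}
    (hu : u ∉ Set.range (algebraMap R L)) {Ps : Set (Ideal R)} (hPs : ∀ P ∈ Ps, P.IsPrime)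
    (huPs : (Algebra.adjoin R {u} : Set L) = ⋂ P ∈ Ps, locSet R L P) {P : Ideal R}
    (hP : P ∈ Ps) : omegaSet R L (maximalIdeal R) ⊆ locSet R L P := by
  refine omegaSet_subset_locSet (hPs P hP) fun hMP => hu (locSet_maximalIdeal_subset_range_s12 ?_)
  have huP : u ∈ locSet R L P := by
    have hu' : u ∈ (Algebra.adjoin R {u} : Set L) := Algebra.self_mem_adjoin_singleton R u
    rw [huPs] at hu'
    exact Set.mem_iInter₂.1 hu' P hP
  rwa [← le_antisymm (le_maximalIdeal (hPs P hP).ne_top) hMP]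

local notation "Ω" => omegaSubring R (FractionRing R) (maximalIdeal R)

variable [IsDomain R]

theorem exists_adjoin_omegaSubring_eq_iInter_locSet (h : IsSQQR R) (u : FractionRing R) :
    ∃ Qs : Set (Ideal Ω), (∀ Q ∈ Qs, Q.IsPrime) ∧
      (Algebra.adjoin Ω {u} : Set (FractionRing R)) = ⋂ Q ∈ Qs, locSet Ω (FractionRing R) Q := by
  have hRΩ : Set.range (algebraMap R (FractionRing R)) ⊆ Ω := range_subset_omegaSet _
  by_cases hu : u ∈ Set.range (algebraMap R (FractionRing R))
  · refine ⟨{Q | Q.IsMaximal}, fun Q hQ => hQ.isPrime, ?_⟩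
    rw [show u = algebraMap Ω _ ⟨u, hRΩ hu⟩ from rfl, Algebra.adjoin_singleton_algebraMap,
      Algebra.coe_bot, range_eq_iInter_locSet]
  obtain ⟨Ps, hPs, huPs⟩ := h u
  have hΩP : ∀ P ∈ Ps, (Ω : Set (FractionRing R)) ⊆ locSet R _ P := fun P hP =>
    omegaSet_subset_locSet_of_adjoin_eq_iInter hu hPs huPs hP
  have hΩu : (Ω : Set (FractionRing R)) ⊆ Algebra.adjoin R {u} :=
    huPs ▸ Set.subset_iInter₂ hΩP
  have hinj := IsFractionRing.injective R (FractionRing R)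
  refine ⟨{Q | Q.IsPrime ∧ ∃ P ∈ Ps, locSet Ω (FractionRing R) Q = locSet R (FractionRing R) P},
    fun Q hQ => hQ.1, ?_⟩
  rw [coe_adjoin_subring_eq hRΩ hΩu, huPs]
  ext x
  simp only [Set.mem_iInter₂]
  refine ⟨fun hx Q ⟨_, P, hP, hQP⟩ => hQP ▸ hx P hP, fun hx P hP => ?_⟩
  have hQP := locSet_contractLocIdeal Ω (hPs P hP) (hΩP P hP) hinj hRΩ
  exact hQP ▸ hx _ ⟨contractLocIdeal_isPrime Ω (hPs P hP) (hΩP P hP) hinj, P, hP, hQP⟩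

end Local

theorem stmt12_general (R : Type*) [CommRing R] [IsDomain R] [IsLocalRing R] (h1 : IsSQQR R) :
    IsSQQR ↥(omegaSubring R (FractionRing R) (IsLocalRing.maximalIdeal R)) := by
  have := isFractionRing_of_range_subset (S := omegaSubring R (FractionRing R)
    (IsLocalRing.maximalIdeal R)) (range_subset_omegaSet _)
  exact isSQQR_of_isFractionRing (exists_adjoin_omegaSubring_eq_iInter_locSet h1)

theorem stmt12 (R : Type*) [CommRing R] [IsDomain R] [IsLocalRing R] (h1 : IsSQQR R)
    (h2 : imageR R (FractionRing R) ⊂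
      omegaSet R (FractionRing R) (IsLocalRing.maximalIdeal R)) :
    IsSQQR ↥(omegaSubring R (FractionRing R) (IsLocalRing.maximalIdeal R)) :=
  stmt12_general R h1

end
end

section
/- Let (R, M) be a local sQQR-domain which is not integrally closed and with R ⊊ (R : M). Then (R : M) = (M : M) = Ω(M), and Ω(M) is the unique minimal overring of R. -/
noncomputable section

/-- The fractional colon `(R : M) = {z : K | zM ⊆ R}`. -/
def colonRM (A L : Type*) [CommRing A] [IsLocalRing A] [CommRing L] [Algebra A L] : Set L :=
  {z : L | ∀ m ∈ IsLocalRing.maximalIdeal A, ∃ r : A, z * algebraMap A L m = algebraMap A L r}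

/-- The colon `(M : M) = {z : K | zM ⊆ M}`. -/
def colonMM (A L : Type*) [CommRing A] [IsLocalRing A] [CommRing L] [Algebra A L] : Set L :=
  {z : L | ∀ m ∈ IsLocalRing.maximalIdeal A, ∃ m' ∈ IsLocalRing.maximalIdeal A,
    z * algebraMap A L m = algebraMap A L m'}

section Aux13
set_option linter.unusedSectionVars false
variable (R : Type*) [CommRing R] [IsDomain R] [IsLocalRing R]

open IsLocalRing

lemma aux_loc_max :
    locSet R (FractionRing R) (maximalIdeal R) = imageR R (FractionRing R) := by
  ext x
  constructor
  · rintro ⟨s, hs, r, hr⟩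
    have hu : IsUnit s := by
      by_contra h
      exact hs ((mem_maximalIdeal s).mpr h)
    obtain ⟨v, rfl⟩ := hu
    exact ⟨r * ↑v⁻¹, by
      rw [map_mul, ← hr, mul_assoc, ← map_mul, Units.mul_inv, map_one, mul_one]⟩
  · rintro ⟨r, rfl⟩
    exact ⟨1, fun h => (maximalIdeal.isMaximal R).ne_top ((Ideal.eq_top_iff_one _).mpr h),
      r, by rw [map_one, mul_one]⟩

lemma aux_omega_loc (P : Ideal R) (hP : P.IsPrime) (hne : P ≠ maximalIdeal R) :
    omegaSet R (FractionRing R) (maximalIdeal R) ⊆ locSet R (FractionRing R) P := by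
  intro z hz
  obtain ⟨s, hsM, hsP⟩ : ∃ s, s ∈ maximalIdeal R ∧ s ∉ P := by
    have hle : P ≤ maximalIdeal R := le_maximalIdeal hP.ne_top
    by_contra h
    push_neg at h
    exact hne (le_antisymm hle fun x hx => h x hx)
  obtain ⟨n, hn, r, hr⟩ := hz s hsM
  exact ⟨s ^ n, fun h => hsP (hP.mem_of_pow_mem n h), r, by rw [map_pow, mul_comm]; exact hr⟩

lemma aux_prime_ne_max {u : FractionRing R} (hu : u ∉ imageR R (FractionRing R))
    {Ps : Set (Ideal R)}
    (heq : (↑(Algebra.adjoin R {u} : Subalgebra R (FractionRing R)) : Set (FractionRing R)) =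
      ⋂ P ∈ Ps, locSet R (FractionRing R) P)
    {P : Ideal R} (hP : P ∈ Ps) : P ≠ maximalIdeal R := by
  rintro rfl
  have hmem : u ∈ (↑(Algebra.adjoin R {u} : Subalgebra R (FractionRing R)) :
      Set (FractionRing R)) := Algebra.subset_adjoin rfl
  rw [heq] at hmem
  have := Set.mem_iInter₂.mp hmem _ hP
  rw [aux_loc_max] at this
  exact hu this

lemma aux_omega_adjoin (h1 : IsSQQR R) {u : FractionRing R}
    (hu : u ∉ imageR R (FractionRing R)) :
    ∃ Ps : Set (Ideal R),
    (↑(Algebra.adjoin R {u} : Subalgebra R (FractionRing R)) : Set (FractionRing R)) =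
      ⋂ P ∈ Ps, locSet R (FractionRing R) P ∧
    omegaSet R (FractionRing R) (maximalIdeal R) ⊆
      ↑(Algebra.adjoin R {u} : Subalgebra R (FractionRing R)) := by
  obtain ⟨Ps, hprime, heq⟩ := h1 u
  refine ⟨Ps, heq, ?_⟩
  intro z hz
  rw [heq]
  refine Set.mem_iInter₂.mpr fun P hP => ?_
  exact aux_omega_loc R P (hprime P hP) (aux_prime_ne_max R hu heq hP) hz

lemma aux_not_principal (h1 : IsSQQR R) (h2 : ¬ IsIntegrallyClosed R)
    (m : R) (hm : m ∈ maximalIdeal R)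
    (hgen : ∀ m' ∈ maximalIdeal R, ∃ r : R, m' = r * m) : False := by
  obtain ⟨u, hui, hu⟩ : ∃ u : FractionRing R, IsIntegral R u ∧
      u ∉ imageR R (FractionRing R) := by
    rw [isIntegrallyClosed_iff (FractionRing R)] at h2
    push_neg at h2
    obtain ⟨x, hx, h⟩ := h2
    exact ⟨x, hx, by rintro ⟨y, hy⟩; exact h y hy⟩
  have hm0 : m ≠ 0 := by
    rintro rfl
    have hfield : IsField R := isField_iff_maximalIdeal_eq.mpr (by
      ext x
      simp only [Ideal.mem_bot]
      constructor
      · intro hx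
        obtain ⟨r, hr⟩ := hgen x hx
        rw [hr, mul_zero]
      · rintro rfl; exact zero_mem _)
    letI : Field R := hfield.toField
    exact h2 inferInstance
  set f := algebraMap R (FractionRing R) with hf
  have hfinj : Function.Injective f := IsFractionRing.injective R (FractionRing R)
  have hfm : f m ≠ 0 := fun h => hm0 (hfinj (by rw [h, map_zero]))
  obtain ⟨Ps, hprime, heq⟩ := h1 u
  set S := Algebra.adjoin R {u} with hS
  have hxS : (f m)⁻¹ ∈ (S : Set (FractionRing R)) := by
    rw [heq]
    refine Set.mem_iInter₂.mpr fun P hP => ?_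
    have hPprime := hprime P hP
    have hmP : m ∉ P := by
      intro hmP
      apply aux_prime_ne_max R hu heq hP
      refine le_antisymm (le_maximalIdeal hPprime.ne_top) fun m' hm' => ?_
      obtain ⟨r, hr⟩ := hgen m' hm'
      rw [hr]
      exact P.mul_mem_left r hmP
    exact ⟨m, hmP, 1, by rw [inv_mul_cancel₀ hfm, map_one]⟩
  have hmu : IsUnit (algebraMap R S m) := by
    refine isUnit_iff_exists_inv.mpr ⟨⟨(f m)⁻¹, hxS⟩, ?_⟩
    refine Subtype.ext ?_
    show f m * (f m)⁻¹ = 1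
    exact mul_inv_cancel₀ hfm
  have hint : Algebra.IsIntegral R S := (Subalgebra.isIntegral_iff S).mpr
    fun x hx => IsIntegral.of_mem_of_fg S hui.fg_adjoin_singleton x hx
  have hker : RingHom.ker (algebraMap R S) ≤ maximalIdeal R := by
    intro x hx
    have h0 : f x = 0 := congrArg Subtype.val hx
    rw [show x = 0 from hfinj (by rw [h0, map_zero])]
    exact zero_mem _
  obtain ⟨Q, hQmax, hQ⟩ :=
    Ideal.exists_ideal_over_maximal_of_isIntegral (S := S) (maximalIdeal R) hker
  have hmQ : algebraMap R S m ∈ Q := by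
    rw [← hQ] at hm
    exact hm
  exact hQmax.ne_top (Q.eq_top_of_isUnit_mem hmQ hmu)

end Aux13

theorem stmt13 (R : Type*) [CommRing R] [IsDomain R] [IsLocalRing R] (h1 : IsSQQR R)
    (h2 : ¬ IsIntegrallyClosed R)
    (h3 : imageR R (FractionRing R) ⊂ colonRM R (FractionRing R)) :
    colonRM R (FractionRing R) = colonMM R (FractionRing R) ∧
    colonRM R (FractionRing R) =
      omegaSet R (FractionRing R) (IsLocalRing.maximalIdeal R) ∧
    ∀ T : Subring (FractionRing R), imageR R (FractionRing R) ⊆ ↑T →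
      imageR R (FractionRing R) ≠ ↑T →
      omegaSet R (FractionRing R) (IsLocalRing.maximalIdeal R) ⊆ ↑T := by
  set f := algebraMap R (FractionRing R) with hf
  have hfinj : Function.Injective f := IsFractionRing.injective R (FractionRing R)
  have c1 : colonRM R (FractionRing R) = colonMM R (FractionRing R) := by
    apply Set.eq_of_subset_of_subset
    · intro z hz m hm
      obtain ⟨r, hr⟩ := hz m hm
      refine ⟨r, ?_, hr⟩
      by_contra hrM
      have hru : IsUnit r := by
        by_contra h
        exact hrM ((IsLocalRing.mem_maximalIdeal r).mpr h)
      obtain ⟨v, rfl⟩ := hru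
      apply aux_not_principal R h1 h2 m hm
      intro m' hm'
      obtain ⟨r', hr'⟩ := hz m' hm'
      have key : (↑v : R) * m' = r' * m := by
        apply hfinj
        rw [map_mul, map_mul, ← hr, ← hr']
        ring
      refine ⟨↑v⁻¹ * r', ?_⟩
      calc m' = ↑v⁻¹ * (↑v * m') := by rw [← mul_assoc, Units.inv_mul, one_mul]
        _ = ↑v⁻¹ * (r' * m) := by rw [key]
        _ = ↑v⁻¹ * r' * m := by ring
    · intro z hz m hm
      obtain ⟨m', _, h⟩ := hz m hm
      exact ⟨m', h⟩
  refine ⟨c1, ?_, ?_⟩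
  · apply Set.eq_of_subset_of_subset
    · intro z hz a ha
      obtain ⟨r, hr⟩ := hz a ha
      exact ⟨1, le_refl 1, r, by rw [pow_one, mul_comm]; exact hr⟩
    · intro z hz
      obtain ⟨w, hwC, hwR⟩ := Set.not_subset.mp h3.2
      have hwMM : w ∈ colonMM R (FractionRing R) := c1 ▸ hwC
      obtain ⟨Ps, heq, hsub⟩ := aux_omega_adjoin R h1 hwR
      have hz' : z ∈ Algebra.adjoin R {w} := hsub hz
      have hall : ∀ x ∈ Algebra.adjoin R {w}, x ∈ colonMM R (FractionRing R) := by
        intro x hx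
        induction hx using Algebra.adjoin_induction with
        | mem x hx =>
          rw [Set.mem_singleton_iff] at hx
          subst hx
          exact hwMM
        | algebraMap r =>
          intro m hm
          exact ⟨r * m, Ideal.mul_mem_left _ r hm, by rw [map_mul, mul_comm]⟩
        | add x y hx hy ihx ihy =>
          intro m hm
          obtain ⟨mx, hmx, ex⟩ := ihx m hm
          obtain ⟨my, hmy, ey⟩ := ihy m hm
          exact ⟨mx + my, add_mem hmx hmy, by rw [map_add, add_mul, ex, ey]⟩
        | mul x y hx hy ihx ihy =>
          intro m hm
          obtain ⟨my, hmy, ey⟩ := ihy m hm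
          obtain ⟨mx, hmx, ex⟩ := ihx my hmy
          exact ⟨mx, hmx, by rw [mul_assoc, ey, ex]⟩
      rw [c1]
      exact hall z hz'
  · intro T hTsub hTne z hz
    obtain ⟨u, huT, huR⟩ :=
      Set.exists_of_ssubset (Set.ssubset_iff_subset_ne.mpr ⟨hTsub, hTne⟩)
    obtain ⟨Ps, heq, hsub⟩ := aux_omega_adjoin R h1 huR
    have hz' : z ∈ Algebra.adjoin R {u} := hsub hz
    have hall : ∀ x ∈ Algebra.adjoin R {u}, x ∈ T := by
      intro x hx
      induction hx using Algebra.adjoin_induction with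
      | mem x hx =>
        rw [Set.mem_singleton_iff] at hx
        subst hx
        exact huT
      | algebraMap r => exact hTsub ⟨r, rfl⟩
      | add x y _ _ ihx ihy => exact T.add_mem ihx ihy
      | mul x y _ _ ihx ihy => exact T.mul_mem ihx ihy
    exact hall z hz'


end
end

section
/- Consider a pullback: T an integral domain, M a maximal ideal of T, φ : T → T/M =: k the quotient map, D a subring of k, and R = φ^{-1}(D). If I is an ideal of R properly containing M, then Ω_R(I) = φ^{-1}(Ω_D(φ(I))). -/
noncomputable section

theorem stmt18 (T : Type*) [CommRing T] [IsDomain T] (M : Ideal T) (hM : M.IsMaximal)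
    (D : Subring (T ⧸ M)) (I : Ideal ↥(Subring.comap (Ideal.Quotient.mk M) D))
    (hMI : ∀ m : T, m ∈ M → ∃ h : m ∈ Subring.comap (Ideal.Quotient.mk M) D,
      (⟨m, h⟩ : ↥(Subring.comap (Ideal.Quotient.mk M) D)) ∈ I)
    (hproper : ∃ a ∈ I, (a : T) ∉ M) :
    {x : FractionRing T | ∀ a ∈ I, ∃ n : ℕ, 1 ≤ n ∧
        ∃ r : ↥(Subring.comap (Ideal.Quotient.mk M) D),
          (algebraMap T (FractionRing T) (a : T)) ^ n * x = algebraMap T (FractionRing T) (r : T)} =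
      algebraMap T (FractionRing T) '' ((Ideal.Quotient.mk M) ⁻¹'
        {y : T ⧸ M | ∀ a ∈ I, ∃ n : ℕ, 1 ≤ n ∧
          ∃ d ∈ D, (Ideal.Quotient.mk M (a : T)) ^ n * y = d}) := by
  set ι := algebraMap T (FractionRing T) with hιdef
  set φ := Ideal.Quotient.mk M with hφdef
  have hinj : Function.Injective ι := IsFractionRing.injective T (FractionRing T)
  ext x
  simp only [Set.mem_setOf_eq, Set.mem_image, Set.mem_preimage]
  constructor
  · intro hx
    obtain ⟨a₀, ha₀I, ha₀M⟩ := hproper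
    obtain ⟨n, hn, r, hr⟩ := hx a₀ ha₀I
    obtain ⟨b, c, hcM, hbc⟩ := hM.exists_inv ha₀M
    obtain ⟨hcR, hcI⟩ := hMI c hcM
    obtain ⟨n', hn', r', hr'⟩ := hx ⟨c, hcR⟩ hcI
    have hcop : IsCoprime c ((a₀ : T)) := ⟨1, b, by rw [one_mul, add_comm]; exact hbc⟩
    obtain ⟨u, v, huv⟩ := (hcop.pow (m := n') (n := n))
    set s : T := u * (r' : T) + v * (r : T) with hs
    have hx_eq : ι s = x := by
      have : ι s = ι u * (ι c ^ n' * x) + ι v * (ι (a₀ : T) ^ n * x) := by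
        rw [hr, hr', hs, map_add, map_mul, map_mul]
      rw [this]
      have : ι u * (ι c ^ n' * x) + ι v * (ι (a₀ : T) ^ n * x)
          = ι (u * c ^ n' + v * (a₀ : T) ^ n) * x := by
        rw [map_add, map_mul, map_mul, map_pow, map_pow]; ring
      rw [this, huv, map_one, one_mul]
    refine ⟨s, ?_, hx_eq⟩
    intro a haI
    obtain ⟨m, hm, rr, hrr⟩ := hx a haI
    have hTeq : (a : T) ^ m * s = (rr : T) := by
      apply hinj
      rw [map_mul, map_pow, hx_eq, hrr]
    refine ⟨m, hm, φ (rr : T), rr.2, ?_⟩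
    rw [← map_pow, ← map_mul, hTeq]
  · rintro ⟨t, ht, rfl⟩
    intro a haI
    obtain ⟨n, hn, d, hdD, hd⟩ := ht a haI
    have hmem : (a : T) ^ n * t ∈ Subring.comap (Ideal.Quotient.mk M) D := by
      show φ ((a : T) ^ n * t) ∈ D
      rw [map_mul, map_pow, hd]
      exact hdD
    exact ⟨n, hn, ⟨(a : T) ^ n * t, hmem⟩, by rw [← map_pow, ← map_mul]⟩

end
end
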